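/- If f ∈ L¹(ℝ²) ∩ L^∞(ℝ²) and K(x) = x^⊥/(2π|x|²), then for any ρ > 0 and any x ∈ ℝ², |(K*f)(x)| ≤ (ρ/2)‖f‖_{L^∞} + (1/(2πρ))‖f‖_{L¹}; optimizing over ρ yields |(K*f)(x)| ≤ π^{-1/2} ‖f‖_{L¹}^{1/2} ‖f‖_{L^∞}^{1/2}. -/

import Mathlib

/-!
Bound `|K(z)| ≤ (|K(z)| - c)⁺ + c` with `c = 1/(2πρ)`. The first part is integrable with
`∫ (|K| - c)⁺ = ρ/2` (layer cake: its superlevel sets are punctured discs of area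
`1/(4π(t + c)²)`), so it pairs with `‖f‖_∞`; the constant part pairs with `‖f‖₁`.
Minimising `ρA/2 + B/(2πρ)` over `ρ > 0` gives `√(AB/π)`.
-/

open MeasureTheory Metric Set Filter RealInnerProductSpace
noncomputable section
abbrev E2 := EuclideanSpace ℝ (Fin 2)
def perp (x : E2) : E2 := !₂[-x 1, x 0]

def K (x : E2) : E2 := (1/(2 * Real.pi * ‖x‖^2) : ℝ) • perp x

open scoped Topology

lemma enorm_le_ofReal_sub_add_ofReal {F : Type*} [SeminormedAddGroup F] (v : F) (c : ℝ) :
    ‖v‖ₑ ≤ ENNReal.ofReal (‖v‖ - c) + ENNReal.ofReal c := by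
  simpa [ofReal_norm] using ENNReal.ofReal_add_le (p := ‖v‖ - c) (q := c)

section ConvolutionBound

variable {G F : Type*} [MeasurableSpace G] [AddGroup G] [MeasurableAdd G] [MeasurableNeg G]
  {μ : Measure G} [μ.IsAddLeftInvariant] [μ.IsNegInvariant]
  [NormedAddCommGroup F] [NormedSpace ℝ F]

lemma enorm_integral_smul_sub_le {f : G → ℝ} (hf : MemLp f ⊤ μ) (k : G → F) (c : ℝ) (x : G) :
    ‖∫ y, f y • k (x - y) ∂μ‖ₑ ≤
      eLpNorm f ⊤ μ * ∫⁻ z, ENNReal.ofReal (‖k z‖ - c) ∂μ + ENNReal.ofReal c * eLpNorm f 1 μ := by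
  have hf_le : ∀ᵐ y ∂μ, ‖f y‖ₑ ≤ eLpNorm f ⊤ μ := by
    simpa only [eLpNorm_exponent_top] using enorm_ae_le_eLpNormEssSup f μ
  calc ‖∫ y, f y • k (x - y) ∂μ‖ₑ
      ≤ ∫⁻ y, ‖f y‖ₑ * ‖k (x - y)‖ₑ ∂μ := by
        simpa only [enorm_smul] using enorm_integral_le_lintegral_enorm (μ := μ) fun y =>
          f y • k (x - y)
    _ ≤ ∫⁻ y, (eLpNorm f ⊤ μ * ENNReal.ofReal (‖k (x - y)‖ - c) +
          ENNReal.ofReal c * ‖f y‖ₑ) ∂μ := by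
        refine lintegral_mono_ae ?_
        filter_upwards [hf_le] with y hy
        calc ‖f y‖ₑ * ‖k (x - y)‖ₑ
            ≤ ‖f y‖ₑ * (ENNReal.ofReal (‖k (x - y)‖ - c) + ENNReal.ofReal c) := by
              gcongr; exact enorm_le_ofReal_sub_add_ofReal _ _
          _ ≤ _ := by rw [mul_add, mul_comm ‖f y‖ₑ (ENNReal.ofReal c)]; gcongr
    _ = eLpNorm f ⊤ μ * ∫⁻ z, ENNReal.ofReal (‖k z‖ - c) ∂μ + ENNReal.ofReal c * eLpNorm f 1 μ := by
        rw [lintegral_add_right' _ (hf.1.enorm.const_mul _),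
          lintegral_const_mul' _ _ ENNReal.ofReal_ne_top, lintegral_const_mul' _ _ hf.2.ne,
          lintegral_sub_left_eq_self (fun z => ENNReal.ofReal (‖k z‖ - c)),
          eLpNorm_one_eq_lintegral_enorm]

end ConvolutionBound

lemma le_two_mul_sqrt_mul_of_forall_le {N a b : ℝ} (ha : 0 ≤ a) (hb : 0 ≤ b)
    (h : ∀ ρ, 0 < ρ → N ≤ a * ρ + b / ρ) : N ≤ 2 * √(a * b) := by
  have hε : ∀ ε > 0, N ≤ 2 * √((a + ε) * (b + ε)) := by
    intro ε hε
    have ha' : 0 < √(a + ε) := Real.sqrt_pos.2 (by linarith)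
    have hb' : 0 < √(b + ε) := Real.sqrt_pos.2 (by linarith)
    calc N ≤ a * (√(b + ε) / √(a + ε)) + b / (√(b + ε) / √(a + ε)) := h _ (by positivity)
      _ ≤ (a + ε) * (√(b + ε) / √(a + ε)) + (b + ε) / (√(b + ε) / √(a + ε)) := by
        gcongr <;> linarith
      _ = 2 * √((a + ε) * (b + ε)) := by
        rw [Real.sqrt_mul (by linarith)]
        field_simp
        rw [Real.sq_sqrt (by linarith), Real.sq_sqrt (by linarith)]
        ring
  have hlim : Tendsto (fun ε => 2 * √((a + ε) * (b + ε))) (𝓝[>] 0) (𝓝 (2 * √(a * b))) := by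
    have : Continuous fun ε => 2 * √((a + ε) * (b + ε)) := by fun_prop
    simpa using (this.tendsto 0).mono_left nhdsWithin_le_nhds
  exact ge_of_tendsto hlim (eventually_nhdsWithin_of_forall hε)

lemma norm_perp (x : E2) : ‖perp x‖ = ‖x‖ := by
  simp only [EuclideanSpace.norm_eq, perp, Fin.sum_univ_two]
  simp [add_comm]

lemma norm_K (x : E2) : ‖K x‖ = (2 * Real.pi * ‖x‖)⁻¹ := by
  rw [K, norm_smul, norm_perp, Real.norm_of_nonneg (by positivity)]
  rcases (norm_nonneg x).eq_or_lt with hx | hx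
  · simp [← hx]
  · field_simp

lemma measurable_norm_K : Measurable fun x : E2 => ‖K x‖ := by
  simp_rw [norm_K]
  fun_prop

lemma setOf_lt_norm_K {s : ℝ} (hs : 0 < s) :
    {z : E2 | s < ‖K z‖} = ball 0 (2 * Real.pi * s)⁻¹ \ {0} := by
  ext z
  simp only [mem_ofPred_eq, norm_K, Set.mem_sdiff, mem_ball_zero_iff, mem_singleton_iff]
  rcases eq_or_ne z 0 with rfl | hz
  · simp [hs.not_gt]
  · have := norm_pos_iff.2 hz
    rw [lt_inv_comm₀ hs (by positivity), mul_inv, ← div_eq_inv_mul,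
      lt_div_iff₀' (by positivity)]
    simp [hz]

lemma volume_setOf_lt_norm_K {s : ℝ} (hs : 0 < s) :
    volume {z : E2 | s < ‖K z‖} = ENNReal.ofReal (4 * Real.pi * s ^ 2)⁻¹ := by
  have := Real.pi_pos
  rw [setOf_lt_norm_K hs, measure_sdiff_null (measure_singleton 0),
    EuclideanSpace.volume_ball_fin_two, ← ENNReal.ofReal_pow (by positivity),
    ← ENNReal.ofReal_mul (by positivity)]
  congr 1
  field_simp
  ring

lemma lintegral_Ioi_inv_add_sq {c : ℝ} (hc : 0 < c) :
    ∫⁻ t in Ioi 0, ENNReal.ofReal ((t + c) ^ 2)⁻¹ = ENNReal.ofReal c⁻¹ := by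
  have hderiv : ∀ t ∈ Ioi (0 : ℝ), HasDerivAt (fun t => -(t + c)⁻¹) ((t + c) ^ 2)⁻¹ t :=
    fun t ht => (((hasDerivAt_id' t).add_const c).inv (add_pos ht hc).ne').neg.congr_deriv
      (by rw [neg_div, neg_neg, one_div])
  have hcont : ContinuousWithinAt (fun t : ℝ => -(t + c)⁻¹) (Ici 0) 0 :=
    ((continuous_add_const c).continuousAt.inv₀ (by simpa using hc.ne')).neg.continuousWithinAt
  have hnonneg : ∀ t ∈ Ioi (0 : ℝ), 0 ≤ ((t + c) ^ 2)⁻¹ := fun t _ => by positivity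
  have hlim : Tendsto (fun t : ℝ => -(t + c)⁻¹) atTop (𝓝 0) := by
    simpa using (tendsto_inv_atTop_zero.comp (tendsto_atTop_add_const_right _ c tendsto_id)).neg
  rw [← ofReal_integral_eq_lintegral_ofReal
      (integrableOn_Ioi_deriv_of_nonneg hcont hderiv hnonneg hlim)
      (ae_restrict_of_forall_mem measurableSet_Ioi hnonneg),
    integral_Ioi_of_hasDerivAt_of_nonneg hcont hderiv hnonneg hlim]
  simp

lemma lintegral_ofReal_norm_K_sub {ρ : ℝ} (hρ : 0 < ρ) :
    ∫⁻ z : E2, ENNReal.ofReal (‖K z‖ - 1 / (2 * Real.pi * ρ)) = ENNReal.ofReal (ρ / 2) := by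
  have := Real.pi_pos
  set c := 1 / (2 * Real.pi * ρ) with hc_def
  have hc : 0 < c := by positivity
  have hlevel : ∀ t ∈ Ioi (0 : ℝ), volume {z : E2 | t < max (‖K z‖ - c) 0} =
      ENNReal.ofReal (4 * Real.pi)⁻¹ * ENNReal.ofReal ((t + c) ^ 2)⁻¹ := by
    intro t (ht : 0 < t)
    have hset : {z : E2 | t < max (‖K z‖ - c) 0} = {z | t + c < ‖K z‖} := by
      ext z
      simp only [mem_ofPred_eq, lt_max_iff, ht.not_gt, or_false]
      constructor <;> intro h <;> linarith
    rw [hset, volume_setOf_lt_norm_K (by positivity), ← ENNReal.ofReal_mul (by positivity),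
      mul_inv]
  calc ∫⁻ z : E2, ENNReal.ofReal (‖K z‖ - c)
      = ∫⁻ z : E2, ENNReal.ofReal (max (‖K z‖ - c) 0) := by
        simp only [ENNReal.ofReal_max, ENNReal.ofReal_zero, max_zero]
    _ = ∫⁻ t in Ioi 0, ENNReal.ofReal (4 * Real.pi)⁻¹ * ENNReal.ofReal ((t + c) ^ 2)⁻¹ := by
        rw [lintegral_eq_lintegral_meas_lt (f := fun z => max (‖K z‖ - c) 0) volume
          (ae_of_all _ fun z => le_max_right _ _)
          ((measurable_norm_K.sub_const c).max measurable_const).aemeasurable]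
        exact setLIntegral_congr_fun measurableSet_Ioi hlevel
    _ = ENNReal.ofReal (ρ / 2) := by
        rw [lintegral_const_mul' _ _ ENNReal.ofReal_ne_top, lintegral_Ioi_inv_add_sq hc,
          ← ENNReal.ofReal_mul (by positivity)]
        congr 1
        rw [hc_def]
        field_simp
        ring

lemma norm_integral_smul_K_sub_le {f : E2 → ℝ} (hf1 : MemLp f 1 volume)
    (hfinf : MemLp f ⊤ volume) {ρ : ℝ} (hρ : 0 < ρ) (x : E2) :
    ‖∫ y : E2, f y • K (x - y)‖ ≤
      (ρ / 2) * (eLpNorm f ⊤ volume).toReal +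
        (1 / (2 * Real.pi * ρ)) * (eLpNorm f 1 volume).toReal := by
  have h := enorm_integral_smul_sub_le hfinf K (1 / (2 * Real.pi * ρ)) x
  rw [lintegral_ofReal_norm_K_sub hρ] at h
  have h' := ENNReal.toReal_mono (by finiteness [hf1.2.ne, hfinf.2.ne]) h
  rwa [toReal_enorm, ENNReal.toReal_add (by finiteness [hfinf.2.ne]) (by finiteness [hf1.2.ne]),
    ENNReal.toReal_mul, ENNReal.toReal_mul, ENNReal.toReal_ofReal (by positivity),
    ENNReal.toReal_ofReal (by positivity), mul_comm] at h'

theorem stmt4 (f : E2 → ℝ)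
    (hf1 : MemLp f 1 (volume : Measure E2)) (hfinf : MemLp f ⊤ (volume : Measure E2)) :
    (∀ ρ : ℝ, 0 < ρ → ∀ x : E2,
        ‖∫ y : E2, f y • K (x - y)‖ ≤
          (ρ/2) * (eLpNorm f ⊤ volume).toReal + (1/(2 * Real.pi * ρ)) * (eLpNorm f 1 volume).toReal)
    ∧ ∀ x : E2,
        ‖∫ y : E2, f y • K (x - y)‖ ≤
          Real.pi ^ (-(1/2) : ℝ) * (eLpNorm f 1 volume).toReal ^ (1/2 : ℝ) *
            (eLpNorm f ⊤ volume).toReal ^ (1/2 : ℝ) := by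
  refine ⟨fun ρ hρ x => norm_integral_smul_K_sub_le hf1 hfinf hρ x, fun x => ?_⟩
  set A := (eLpNorm f ⊤ volume).toReal
  set B := (eLpNorm f 1 volume).toReal
  have hB : 0 ≤ B := ENNReal.toReal_nonneg
  have h := le_two_mul_sqrt_mul_of_forall_le (a := A / 2) (b := B / (2 * Real.pi))
    (by positivity) (by positivity)
    fun ρ hρ => (norm_integral_smul_K_sub_le hf1 hfinf hρ x).trans_eq (by ring)
  have hoptimum : 2 * √(A / 2 * (B / (2 * Real.pi))) =
      Real.pi ^ (-(1/2) : ℝ) * B ^ (1/2 : ℝ) * A ^ (1/2 : ℝ) := by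
    rw [Real.rpow_neg Real.pi_pos.le, ← Real.sqrt_eq_rpow, ← Real.sqrt_eq_rpow,
      ← Real.sqrt_eq_rpow, show A / 2 * (B / (2 * Real.pi)) = B * A / Real.pi / 2 ^ 2 by ring,
      Real.sqrt_div' _ (by positivity), Real.sqrt_sq zero_le_two,
      Real.sqrt_div' _ Real.pi_pos.le, Real.sqrt_mul hB]
    field_simp
  exact h.trans_eq hoptimum
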